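/- Loss simplification at critical points: Let Y, Z ∈ ℝ^{d×n}, G := Y Zᵀ (ZZᵀ + λI)⁻¹ Z Yᵀ with eigendecomposition G = U Λ Uᵀ. Suppose W₂ ∈ ℝ^{d×k}, W₁ ∈ ℝ^{k×d} satisfy W₂W₁ = P Y Zᵀ (ZZᵀ + λI)⁻¹ where P is the orthogonal projection onto col(W₂) and P commutes with G, with Uᵀ P U block-diagonal having top-left diagonal block 𝒟. Then (in the λ → 0 limit) ‖Y - W₂W₁Z‖_F² = Tr(YYᵀ) - Tr(𝒟 Λ). -/

import Mathlib

/-!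
With `Q = Zᵀ (Z Zᵀ)⁻¹ Z`, the critical-point condition reads `W₂ W₁ Z = P Y Q`, where `P` and `Q`
are orthogonal projections. Expanding `‖Y - P Y Q‖_F²`, the two cross terms and the quadratic term
all have trace `Tr(P G)` with `G = Y Q Yᵀ`, so the loss is `Tr(Y Yᵀ) - Tr(P G)`. Cyclicity of the
trace turns `Tr(P U Λ Uᵀ)` into `∑ᵢ (Uᵀ P U)ᵢᵢ λᵢ`, and only the first `r` eigenvalues are nonzero.
-/

open Matrix

/-- Squared Frobenius norm. -/
noncomputable def frobSq {d n : ℕ} (M : Matrix (Fin d) (Fin n) ℝ) : ℝ :=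
  ∑ i, ∑ j, (M i j) ^ 2

namespace Matrix

variable {m n R : Type*} [Fintype m] [Fintype n]

section Field

variable [DecidableEq m] [Field R]

lemma transpose_transpose_mul_inv_mul (Z : Matrix m n R) :
    (Zᵀ * (Z * Zᵀ)⁻¹ * Z)ᵀ = Zᵀ * (Z * Zᵀ)⁻¹ * Z := by
  rw [transpose_mul, transpose_mul, transpose_nonsing_inv, transpose_mul, transpose_transpose,
    Matrix.mul_assoc]

lemma transpose_mul_inv_mul_mul_self (Z : Matrix m n R) (hZ : IsUnit (Z * Zᵀ).det) :
    Zᵀ * (Z * Zᵀ)⁻¹ * Z * (Zᵀ * (Z * Zᵀ)⁻¹ * Z) = Zᵀ * (Z * Zᵀ)⁻¹ * Z := by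
  calc Zᵀ * (Z * Zᵀ)⁻¹ * Z * (Zᵀ * (Z * Zᵀ)⁻¹ * Z)
      = Zᵀ * ((Z * Zᵀ)⁻¹ * (Z * Zᵀ)) * (Z * Zᵀ)⁻¹ * Z := by simp only [Matrix.mul_assoc]
    _ = Zᵀ * (Z * Zᵀ)⁻¹ * Z := by rw [nonsing_inv_mul _ hZ, Matrix.mul_one]

end Field

lemma trace_mul_diagonal_conj [CommSemiring R] [DecidableEq n]
    (P : Matrix m m R) (U : Matrix m n R) (L : n → R) (V : Matrix n m R) :
    trace (P * (U * diagonal L * V)) = ∑ i, (V * P * U) i i * L i := by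
  rw [← Matrix.mul_assoc, ← Matrix.mul_assoc, trace_mul_cycle, ← Matrix.mul_assoc]
  simp [trace, mul_diagonal]

end Matrix

lemma frobSq_eq_trace {d n : ℕ} (M : Matrix (Fin d) (Fin n) ℝ) :
    frobSq M = trace (M * Mᵀ) := by
  simp [frobSq, trace, diag, mul_apply, sq]

lemma frobSq_sub_proj_mul_proj {d n : ℕ} (Y : Matrix (Fin d) (Fin n) ℝ)
    {P : Matrix (Fin d) (Fin d) ℝ} {Q : Matrix (Fin n) (Fin n) ℝ}
    (hPsymm : Pᵀ = P) (hPidem : P * P = P) (hQsymm : Qᵀ = Q) (hQidem : Q * Q = Q) :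
    frobSq (Y - P * Y * Q) = trace (Y * Yᵀ) - trace (P * (Y * Q * Yᵀ)) := by
  have hcross : trace (Y * (P * Y * Q)ᵀ) = trace (P * (Y * Q * Yᵀ)) := by
    rw [transpose_mul, transpose_mul, hPsymm, hQsymm, ← Matrix.mul_assoc, ← Matrix.mul_assoc,
      trace_mul_comm]
  have hcross' : trace (P * Y * Q * Yᵀ) = trace (P * (Y * Q * Yᵀ)) := by
    simp only [Matrix.mul_assoc]
  have hsquare : trace (P * Y * Q * (P * Y * Q)ᵀ) = trace (P * (Y * Q * Yᵀ)) := by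
    rw [transpose_mul, transpose_mul, hPsymm, hQsymm]
    calc trace (P * Y * Q * (Q * (Yᵀ * P)))
        = trace (P * (Y * (Q * Q) * Yᵀ) * P) := by simp only [Matrix.mul_assoc]
      _ = trace (P * P * (Y * Q * Yᵀ)) := by rw [hQidem, trace_mul_cycle]
      _ = trace (P * (Y * Q * Yᵀ)) := by rw [hPidem]
  rw [frobSq_eq_trace, transpose_sub, Matrix.sub_mul, Matrix.mul_sub, Matrix.mul_sub, trace_sub,
    trace_sub, trace_sub, hcross, hsquare, hcross']
  ring

theorem stmt18_general {d n k r : ℕ}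
    (Y Z : Matrix (Fin d) (Fin n) ℝ)
    (hZ : IsUnit (Z * Zᵀ).det)
    (G : Matrix (Fin d) (Fin d) ℝ)
    (hG : G = Y * Zᵀ * (Z * Zᵀ)⁻¹ * Z * Yᵀ)
    (U : Matrix (Fin d) (Fin d) ℝ)
    (L : Fin d → ℝ) (hGeig : G = U * Matrix.diagonal L * Uᵀ)
    (hLzero : ∀ i : Fin d, r ≤ (i : ℕ) → L i = 0)
    (W₂ : Matrix (Fin d) (Fin k) ℝ) (W₁ : Matrix (Fin k) (Fin d) ℝ)
    (P : Matrix (Fin d) (Fin d) ℝ) (hPsymm : Pᵀ = P) (hPidem : P * P = P)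
    (hcrit : W₂ * W₁ = P * Y * Zᵀ * (Z * Zᵀ)⁻¹) :
    frobSq (Y - W₂ * W₁ * Z) =
      Matrix.trace (Y * Yᵀ) -
        ∑ i : Fin d, (if (i : ℕ) < r then (Uᵀ * P * U) i i * L i else 0) := by
  set Q := Zᵀ * (Z * Zᵀ)⁻¹ * Z
  have hfit : W₂ * W₁ * Z = P * Y * Q := by simp only [hcrit, Q, Matrix.mul_assoc]
  have hGQ : Y * Q * Yᵀ = G := by simp only [hG, Q, Matrix.mul_assoc]
  rw [hfit, frobSq_sub_proj_mul_proj Y hPsymm hPidem (transpose_transpose_mul_inv_mul Z)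
    (transpose_mul_inv_mul_mul_self Z hZ), hGQ, hGeig, trace_mul_diagonal_conj]
  congr 1
  refine Finset.sum_congr rfl fun i _ => ?_
  split_ifs with hi
  · rfl
  · rw [hLzero i (not_lt.mp hi), mul_zero]

/-- Loss simplification at critical points of the two-layer linear network (ridgeless
limit): `‖Y - W₂ W₁ Z‖_F² = Tr(Y Yᵀ) - Tr(𝒟 Λ)`, where `𝒟` is the top-left `r × r`
diagonal block of `Uᵀ P U`. -/
theorem stmt18 {d n k r : ℕ}
    (Y Z : Matrix (Fin d) (Fin n) ℝ)
    (hZ : IsUnit (Z * Zᵀ).det)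
    (G : Matrix (Fin d) (Fin d) ℝ)
    (hG : G = Y * Zᵀ * (Z * Zᵀ)⁻¹ * Z * Yᵀ)
    (U : Matrix (Fin d) (Fin d) ℝ) (hU : Uᵀ * U = 1)
    (L : Fin d → ℝ) (hGeig : G = U * Matrix.diagonal L * Uᵀ)
    (hLzero : ∀ i : Fin d, r ≤ (i : ℕ) → L i = 0)
    (W₂ : Matrix (Fin d) (Fin k) ℝ) (W₁ : Matrix (Fin k) (Fin d) ℝ)
    (P : Matrix (Fin d) (Fin d) ℝ) (hPsymm : Pᵀ = P) (hPidem : P * P = P)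
    (hPW : P * W₂ = W₂) (hPrange : ∃ M : Matrix (Fin k) (Fin d) ℝ, P = W₂ * M)
    (hcomm : P * G = G * P)
    (hcrit : W₂ * W₁ = P * Y * Zᵀ * (Z * Zᵀ)⁻¹)
    (hblock : ∀ i j : Fin d, (i : ℕ) < r → (j : ℕ) < r → i ≠ j → (Uᵀ * P * U) i j = 0) :
    frobSq (Y - W₂ * W₁ * Z) =
      Matrix.trace (Y * Yᵀ) -
        ∑ i : Fin d, (if (i : ℕ) < r then (Uᵀ * P * U) i i * L i else 0) :=
  stmt18_general Y Z hZ G hG U L hGeig hLzero W₂ W₁ P hPsymm hPidem hcrit
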